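/- arXiv:2505.20627 — 2 statements merged into one kernel-verified Lean document; each statement's English description precedes it below -/
import Mathlib

section
/- Suppose Ψ satisfies Ψ(t) + Ψ(1−t) = 2Ψ(1/2) for all t ∈ [0,1] and Ψ(t) < Ψ(1/2) for all t ∈ [0,1/2). Let S₁ ⊆ [n] be a Smith set: for every i ∈ S₁ and j ∉ S₁, P(y_i ≻ y_j) > 1/2. Then for any Nash equilibrium (π₁*, π₂*) of the game with payoff Ψ(P(y_i ≻ y_j)), the support of π₁* is contained in S₁. -/
open Finset

/-- A probability vector on `Fin n`. -/
def IsProb {n : ℕ} (π : Fin n → ℝ) : Prop := (∀ i, 0 ≤ π i) ∧ ∑ i, π i = 1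

/-- Expected payoff of the two-player game with payoff matrix `A`. -/
def payoff {n : ℕ} (A : Fin n → Fin n → ℝ) (π π' : Fin n → ℝ) : ℝ :=
  ∑ i, ∑ j, π i * π' j * A i j

/-- Nash equilibrium of the zero-sum game with payoff matrix `A`. -/
def IsNash {n : ℕ} (A : Fin n → Fin n → ℝ) (π₁ π₂ : Fin n → ℝ) : Prop :=
  IsProb π₁ ∧ IsProb π₂ ∧
  (∀ π, IsProb π → payoff A π π₂ ≤ payoff A π₁ π₂) ∧
  (∀ π', IsProb π' → payoff A π₁ π₂ ≤ payoff A π₁ π')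

/-
Subtracting `Ψ (1 / 2)` from the payoff matrix makes it skew-symmetric, so the game is
symmetric with value `Ψ (1 / 2)` and `π₁` must secure that value against every pure column.
Suppose `π₁` puts mass outside the Smith set `S₁`. Weighting the columns in `S₁` by `π₁`
itself (or taking any single column of `S₁` if `π₁` vanishes on `S₁`), the `S₁ × S₁` block
cancels by skew-symmetry, and every remaining entry is negative because the Smith set beats
its complement, so `π₁` falls short of the value.
-/

theorem sum_mul_sum_mul_eq_zero_of_antisymm {ι : Type*} {B : ι → ι → ℝ}
    (hB : ∀ i j, B j i = -B i j) (s : Finset ι) (x : ι → ℝ) :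
    ∑ j ∈ s, x j * ∑ i ∈ s, x i * B i j = 0 := by
  have hswap : ∑ j ∈ s, x j * ∑ i ∈ s, x i * B i j
      = -∑ j ∈ s, x j * ∑ i ∈ s, x i * B i j := by
    simp only [mul_sum, ← sum_neg_distrib]
    rw [sum_comm]
    refine sum_congr rfl fun j _ => sum_congr rfl fun i _ => ?_
    rw [hB]; ring
  linarith

theorem mem_of_pos_of_column_nonneg {ι : Type*} [Fintype ι] [DecidableEq ι]
    {B : ι → ι → ℝ} (hB : ∀ i j, B j i = -B i j) {x : ι → ℝ} (hx : ∀ i, 0 ≤ x i)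
    {S : Finset ι} (hS : S.Nonempty) (hneg : ∀ i ∉ S, ∀ j ∈ S, B i j < 0)
    (hcol : ∀ j ∈ S, 0 ≤ ∑ i, x i * B i j) {i₀ : ι} (hi₀ : 0 < x i₀) : i₀ ∈ S := by
  by_contra hi₀S
  have hsplit (j : ι) : ∑ i, x i * B i j = ∑ i ∈ S, x i * B i j + ∑ i ∈ Sᶜ, x i * B i j :=
    (sum_add_sum_compl S _).symm
  have hout (j : ι) (hj : j ∈ S) : ∑ i ∈ Sᶜ, x i * B i j < 0 :=
    sum_neg' (fun i hi => mul_nonpos_of_nonneg_of_nonpos (hx i)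
        (hneg i (mem_compl.1 hi) j hj).le)
      ⟨i₀, mem_compl.2 hi₀S, mul_neg_of_pos_of_neg hi₀ (hneg i₀ hi₀S j hj)⟩
  by_cases hzero : ∀ j ∈ S, x j = 0
  · obtain ⟨j, hj⟩ := hS
    have hin : ∑ i ∈ S, x i * B i j = 0 :=
      sum_eq_zero fun i hi => by rw [hzero i hi, zero_mul]
    linarith [hcol j hj, hsplit j, hout j hj]
  · push Not at hzero
    obtain ⟨j₀, hj₀, hxj₀⟩ := hzero
    have hweighted : 0 ≤ ∑ j ∈ S, x j * ∑ i, x i * B i j :=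
      sum_nonneg fun j hj => mul_nonneg (hx j) (hcol j hj)
    have hout_weighted : ∑ j ∈ S, x j * ∑ i ∈ Sᶜ, x i * B i j < 0 :=
      sum_neg' (fun j hj => mul_nonpos_of_nonneg_of_nonpos (hx j) (hout j hj).le)
        ⟨j₀, hj₀, mul_neg_of_pos_of_neg ((hx j₀).lt_of_ne' hxj₀) (hout j₀ hj₀)⟩
    have hin := sum_mul_sum_mul_eq_zero_of_antisymm hB S x
    simp only [hsplit, mul_add, sum_add_distrib] at hweighted
    linarith

section
variable {n : ℕ} {A : Fin n → Fin n → ℝ} {c : ℝ}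

theorem payoff_sub_const {π π' : Fin n → ℝ} (hπ : ∑ i, π i = 1) (hπ' : ∑ j, π' j = 1) :
    payoff (fun i j => A i j - c) π π' = payoff A π π' - c := by
  simp only [payoff, mul_sub, sum_sub_distrib, ← mul_sum, ← sum_mul, hπ, hπ',
    mul_one, one_mul]

theorem payoff_single_right (π : Fin n → ℝ) (k : Fin n) :
    payoff A π (Pi.single k 1) = ∑ i, π i * A i k := by
  simp [payoff, Pi.single_apply]

theorem isProb_single (k : Fin n) : IsProb (Pi.single k (1 : ℝ)) :=
  ⟨fun i => by by_cases h : i = k <;> simp [h], by simp⟩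

theorem payoff_self_of_add_eq (hA : ∀ i j, A i j + A j i = 2 * c) {π : Fin n → ℝ}
    (hπ : ∑ i, π i = 1) : payoff A π π = c := by
  have h : payoff (fun i j => A i j - c) π π = 0 := by
    simpa only [payoff, mul_assoc, ← mul_sum] using
      sum_mul_sum_mul_eq_zero_of_antisymm (B := fun i j => A j i - c)
        (fun i j => by linarith [hA i j]) univ π
  linarith [payoff_sub_const (A := A) (c := c) hπ hπ]

theorem IsNash.payoff_eq (hA : ∀ i j, A i j + A j i = 2 * c) {π₁ π₂ : Fin n → ℝ}
    (h : IsNash A π₁ π₂) : payoff A π₁ π₂ = c := by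
  obtain ⟨hπ₁, hπ₂, hmax, hmin⟩ := h
  linarith [hmax π₂ hπ₂, hmin π₁ hπ₁, payoff_self_of_add_eq hA hπ₁.2,
    payoff_self_of_add_eq hA hπ₂.2]

theorem IsNash.column_nonneg (hA : ∀ i j, A i j + A j i = 2 * c) {π₁ π₂ : Fin n → ℝ}
    (h : IsNash A π₁ π₂) (k : Fin n) : 0 ≤ ∑ i, π₁ i * (A i k - c) := by
  have hk := (isProb_single k).2
  rw [← payoff_single_right (A := fun i j => A i j - c), payoff_sub_const h.1.2 hk]
  linarith [h.2.2.2 _ (isProb_single k), h.payoff_eq hA]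

end

theorem stmt_6_general {n : ℕ} (P : Fin n → Fin n → ℝ) (Ψ : ℝ → ℝ)
    (hP01 : ∀ i j, 0 ≤ P i j ∧ P i j ≤ 1)
    (hPanti : ∀ i j, P i j + P j i = 1)
    (hΨsym : ∀ t : ℝ, 0 ≤ t → t ≤ 1 → Ψ t + Ψ (1 - t) = 2 * Ψ (1 / 2))
    (hΨlt : ∀ t : ℝ, 0 ≤ t → t < 1 / 2 → Ψ t < Ψ (1 / 2))
    (S₁ : Finset (Fin n)) (hS₁ne : S₁.Nonempty)
    (hSmith : ∀ i ∈ S₁, ∀ j ∉ S₁, 1 / 2 < P i j)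
    (π₁ π₂ : Fin n → ℝ)
    (hNash : IsNash (fun i j => Ψ (P i j)) π₁ π₂) :
    ∀ i, 0 < π₁ i → i ∈ S₁ := by
  have hA : ∀ i j, Ψ (P i j) + Ψ (P j i) = 2 * Ψ (1 / 2) := fun i j => by
    rw [show P j i = 1 - P i j by linarith [hPanti i j]]
    exact hΨsym _ (hP01 i j).1 (hP01 i j).2
  have hneg : ∀ i ∉ S₁, ∀ j ∈ S₁, Ψ (P i j) - Ψ (1 / 2) < 0 := fun i hi j hj => by
    have := hΨlt (P i j) (hP01 i j).1 (by linarith [hPanti i j, hSmith j hj i hi])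
    linarith
  intro i hi
  exact mem_of_pos_of_column_nonneg (fun i j => by linarith [hA i j]) hNash.1.1 hS₁ne hneg
    (fun j _ => hNash.column_nonneg hA j) hi

theorem stmt_6 {n : ℕ} (P : Fin n → Fin n → ℝ) (Ψ : ℝ → ℝ)
    (hP01 : ∀ i j, 0 ≤ P i j ∧ P i j ≤ 1)
    (hPanti : ∀ i j, P i j + P j i = 1)
    (hNoTie : ∀ i j, i ≠ j → P i j ≠ 1 / 2)
    (hΨsym : ∀ t : ℝ, 0 ≤ t → t ≤ 1 → Ψ t + Ψ (1 - t) = 2 * Ψ (1 / 2))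
    (hΨlt : ∀ t : ℝ, 0 ≤ t → t < 1 / 2 → Ψ t < Ψ (1 / 2))
    (S₁ : Finset (Fin n)) (hS₁ne : S₁.Nonempty)
    (hSmith : ∀ i ∈ S₁, ∀ j ∉ S₁, 1 / 2 < P i j)
    (π₁ π₂ : Fin n → ℝ)
    (hNash : IsNash (fun i j => Ψ (P i j)) π₁ π₂) :
    ∀ i, 0 < π₁ i → i ∈ S₁ :=
  stmt_6_general P Ψ hP01 hPanti hΨsym hΨlt S₁ hS₁ne hSmith π₁ π₂ hNash
end

section
/- For any probability vector π* on [n] with π* > 0, the payoff matrix α_{ij} = π*_i + π*_j − δ_{ij} (with δ_{ij} the Kronecker delta) satisfies the KKT conditions certifying that π* is a maximin strategy of the associated zero-sum game, with t* = Σ_i (π*_i)² and u* = π*. In particular π* is a Nash solution. -/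
/-
With `u* = π*`, the matrix `α_{ij} = π*_i + π*_j − δ_{ij}` has all column sums `Σ_i π*_i α_{ij}`
and all row sums `Σ_j α_{ij} π*_j` equal to `Σ_i (π*_i)² − π*_j + π*_j · Σ_i π*_i = Σ_i (π*_i)²`.
A mixed strategy whose columns all pay at least `t`, together with an opponent strategy whose rows
all pay at most `t`, pins every player-one worst case below `t` and that of `π*` above it.
-/

open Finset

/-- The worst-case payoff for the first player playing `π`. -/
noncomputable def worstCase {n : ℕ} (A : Fin n → Fin n → ℝ) (π : Fin n → ℝ) : ℝ :=
  sInf ((fun π' => payoff A π π') '' {π' | IsProb π'})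

/-- `π` is an optimal maximin strategy for the first player. -/
def IsMaximin {n : ℕ} (A : Fin n → Fin n → ℝ) (π : Fin n → ℝ) : Prop :=
  IsProb π ∧ ∀ π', IsProb π' → worstCase A π' ≤ worstCase A π

section Certificate

variable {n : ℕ} {A : Fin n → Fin n → ℝ} {π π' u : Fin n → ℝ} {t : ℝ}

theorem IsProb.sum_mul_le (hp : IsProb π) {f : Fin n → ℝ} (hf : ∀ i, f i ≤ t) :
    ∑ i, π i * f i ≤ t :=
  calc ∑ i, π i * f i ≤ ∑ i, π i * t :=
        sum_le_sum fun i _ => mul_le_mul_of_nonneg_left (hf i) (hp.1 i)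
    _ = t := by rw [← sum_mul, hp.2, one_mul]

theorem IsProb.le_sum_mul (hp : IsProb π) {f : Fin n → ℝ} (hf : ∀ i, t ≤ f i) :
    t ≤ ∑ i, π i * f i :=
  calc t = ∑ i, π i * t := by rw [← sum_mul, hp.2, one_mul]
    _ ≤ ∑ i, π i * f i := sum_le_sum fun i _ => mul_le_mul_of_nonneg_left (hf i) (hp.1 i)

theorem payoff_eq_sum_row (A : Fin n → Fin n → ℝ) (π π' : Fin n → ℝ) :
    payoff A π π' = ∑ i, π i * ∑ j, A i j * π' j := by
  simp only [payoff, mul_sum]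
  exact sum_congr rfl fun i _ => sum_congr rfl fun j _ => by ring

theorem payoff_eq_sum_col (A : Fin n → Fin n → ℝ) (π π' : Fin n → ℝ) :
    payoff A π π' = ∑ j, π' j * ∑ i, π i * A i j := by
  rw [payoff, sum_comm]
  simp only [mul_sum]
  exact sum_congr rfl fun j _ => sum_congr rfl fun i _ => by ring

theorem payoff_le_of_forall_row_le (hπ : IsProb π) (hrow : ∀ i, ∑ j, A i j * u j ≤ t) :
    payoff A π u ≤ t := by
  rw [payoff_eq_sum_row]
  exact hπ.sum_mul_le hrow

theorem le_payoff_of_forall_le_col (hπ' : IsProb π') (hcol : ∀ j, t ≤ ∑ i, π i * A i j) :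
    t ≤ payoff A π π' := by
  rw [payoff_eq_sum_col]
  exact hπ'.le_sum_mul hcol

theorem bddBelow_payoff_image (A : Fin n → Fin n → ℝ) (π : Fin n → ℝ) :
    BddBelow ((fun π' => payoff A π π') '' {π' | IsProb π'}) := by
  refine ⟨-∑ k, |∑ i, π i * A i k|, ?_⟩
  rintro _ ⟨π', hπ', rfl⟩
  refine le_payoff_of_forall_le_col hπ' fun j => ?_
  have hj : |∑ i, π i * A i j| ≤ ∑ k, |∑ i, π i * A i k| :=
    single_le_sum (f := fun k => |∑ i, π i * A i k|) (fun _ _ => abs_nonneg _) (mem_univ j)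
  linarith [neg_abs_le (∑ i, π i * A i j)]

theorem worstCase_le_of_forall_row_le (hu : IsProb u) (hrow : ∀ i, ∑ j, A i j * u j ≤ t)
    (hπ : IsProb π) : worstCase A π ≤ t :=
  (csInf_le (bddBelow_payoff_image A π) ⟨u, hu, rfl⟩).trans (payoff_le_of_forall_row_le hπ hrow)

theorem le_worstCase_of_forall_le_col (hu : IsProb u) (hcol : ∀ j, t ≤ ∑ i, π i * A i j) :
    t ≤ worstCase A π := by
  refine le_csInf ⟨_, u, hu, rfl⟩ ?_
  rintro _ ⟨π', hπ', rfl⟩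
  exact le_payoff_of_forall_le_col hπ' hcol

theorem isMaximin_of_certificate (hπ : IsProb π) (hu : IsProb u)
    (hcol : ∀ j, t ≤ ∑ i, π i * A i j) (hrow : ∀ i, ∑ j, A i j * u j ≤ t) :
    IsMaximin A π :=
  ⟨hπ, fun _ hπ' =>
    (worstCase_le_of_forall_row_le hu hrow hπ').trans (le_worstCase_of_forall_le_col hu hcol)⟩

end Certificate

theorem sum_mul_add_sub_ite_eq_sum_sq {n : ℕ} {π : Fin n → ℝ} (hsum : ∑ i, π i = 1) (j : Fin n) :
    ∑ i, π i * (π i + π j - if i = j then 1 else 0) = ∑ i, π i ^ 2 := by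
  simp only [mul_sub, mul_add, sum_sub_distrib, sum_add_distrib, ← sum_mul, hsum, mul_ite,
    mul_one, mul_zero, sum_ite_eq', mem_univ, if_true, sq]
  ring

theorem sum_add_sub_ite_mul_eq_sum_sq {n : ℕ} {π : Fin n → ℝ} (hsum : ∑ i, π i = 1) (i : Fin n) :
    ∑ j, (π i + π j - if i = j then 1 else 0) * π j = ∑ i, π i ^ 2 := by
  rw [← sum_mul_add_sub_ite_eq_sum_sq hsum i]
  refine sum_congr rfl fun j _ => ?_
  simp only [eq_comm (a := i)]
  ring

theorem stmt_13 {n : ℕ} (πs : Fin n → ℝ) (hpos : ∀ i, 0 < πs i) (hsum : ∑ i, πs i = 1) :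
    (∀ j, ∑ i, πs i * (πs i + πs j - if i = j then 1 else 0) ≤ ∑ i, (πs i) ^ 2) ∧
    (∀ j, πs j * ((∑ i, πs i * (πs i + πs j - if i = j then 1 else 0)) - ∑ i, (πs i) ^ 2) = 0) ∧
    (∀ i, ∑ j, (πs i + πs j - if i = j then 1 else 0) * πs j = ∑ i, (πs i) ^ 2) ∧
    IsMaximin (fun i j => πs i + πs j - if i = j then 1 else 0) πs := by
  have hprob : IsProb πs := ⟨fun i => (hpos i).le, hsum⟩
  have hcol := sum_mul_add_sub_ite_eq_sum_sq hsum
  have hrow := sum_add_sub_ite_mul_eq_sum_sq hsum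
  refine ⟨fun j => (hcol j).le, fun j => by rw [hcol j, sub_self, mul_zero], hrow, ?_⟩
  exact isMaximin_of_certificate hprob hprob (fun j => (hcol j).ge) fun i => (hrow i).le
end
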